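/- arXiv:2511.12293 — 2 statements merged into one kernel-verified Lean document; each statement's English description precedes it below -/
import Mathlib

section
/- Let φ ∈ C¹(ℝ²) and suppose r > 0 is such that there exists a sequence rₙ → r with rₙ ≠ r and φ constant on each circle { |x| = rₙ }. Then for all x, y ∈ ℝ² with |x| = |y| = r, the radial derivatives agree: ∂φ/∂ν_x(x) = ∂φ/∂ν_y(y), where ν_x = x/|x|. -/
noncomputable section

open Real Set Metric

/-- The plane with the Euclidean norm. -/
abbrev E2 := EuclideanSpace ℝ (Fin 2)

/-- Standard basis vectors. -/
def ee (i : Fin 2) : E2 := EuclideanSpace.single i 1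

/-- Partial derivative in the `i`-th coordinate direction. -/
def pd (i : Fin 2) (f : E2 → ℝ) (x : E2) : ℝ := fderiv ℝ f x (ee i)

/-- `∇⊥f · ∇g = -(∂₂f)(∂₁g) + (∂₁f)(∂₂g)`. -/
def perpDot (f g : E2 → ℝ) (x : E2) : ℝ := -(pd 1 f x) * pd 0 g x + pd 0 f x * pd 1 g x

/-- The Laplacian `Δf = ∂₁₁f + ∂₂₂f`. -/
def lap (f : E2 → ℝ) (x : E2) : ℝ := pd 0 (pd 0 f) x + pd 1 (pd 1 f) x

/-- `x⊥ = (-x₂, x₁)`. -/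
def perpVec (x : E2) : E2 :=
  EuclideanSpace.single 0 (-(x 1)) + EuclideanSpace.single 1 (x 0)

/-- The perpendicular gradient `∇⊥f = (-∂₂f, ∂₁f)`. -/
def perpGrad (f : E2 → ℝ) (x : E2) : E2 :=
  EuclideanSpace.single 0 (-(pd 1 f x)) + EuclideanSpace.single 1 (pd 0 f x)

/-- If `φ` is constant on circles of radii `rₙ → r`, `rₙ ≠ r`, `r > 0`, then the radial
derivatives of `φ` agree at all points of the circle of radius `r`. -/
theorem stmt2 (φ : E2 → ℝ) (hφ : ContDiff ℝ 1 φ) (r : ℝ) (hr : 0 < r)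
    (rn : ℕ → ℝ) (hlim : Filter.Tendsto rn Filter.atTop (nhds r))
    (hne : ∀ n, rn n ≠ r)
    (hconst : ∀ n, ∀ x y : E2, ‖x‖ = rn n → ‖y‖ = rn n → φ x = φ y) :
    ∀ x y : E2, ‖x‖ = r → ‖y‖ = r →
      fderiv ℝ φ x (‖x‖⁻¹ • x) = fderiv ℝ φ y (‖y‖⁻¹ • y) := by
  intro x y hx hy
  rw [hx, hy]
  set u : E2 := r⁻¹ • x with hu
  set v : E2 := r⁻¹ • y with hv
  have hru : r • u = x := by rw [hu, smul_smul, mul_inv_cancel₀ hr.ne', one_smul]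
  have hrv : r • v = y := by rw [hv, smul_smul, mul_inv_cancel₀ hr.ne', one_smul]
  have hun : ‖u‖ = 1 := by
    rw [hu, norm_smul, hx, Real.norm_eq_abs, abs_of_pos (inv_pos.mpr hr),
      inv_mul_cancel₀ hr.ne']
  have hvn : ‖v‖ = 1 := by
    rw [hv, norm_smul, hy, Real.norm_eq_abs, abs_of_pos (inv_pos.mpr hr),
      inv_mul_cancel₀ hr.ne']
  set f : ℝ → ℝ := fun s => φ (s • u) - φ (s • v) with hf
  have hdφ := hφ.differentiable one_ne_zero
  have hgu : HasDerivAt (fun s : ℝ => φ (s • u)) (fderiv ℝ φ x u) r := by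
    have h1 : HasDerivAt (fun s : ℝ => s • u) ((1:ℝ) • u) r :=
      (hasDerivAt_id r).smul_const u
    rw [one_smul] at h1
    have h2 := (hdφ x).hasFDerivAt
    have h2' : HasFDerivAt φ (fderiv ℝ φ x) (r • u) := by rw [hru]; exact h2
    exact h2'.comp_hasDerivAt r h1
  have hgv : HasDerivAt (fun s : ℝ => φ (s • v)) (fderiv ℝ φ y v) r := by
    have h1 : HasDerivAt (fun s : ℝ => s • v) ((1:ℝ) • v) r :=
      (hasDerivAt_id r).smul_const v
    rw [one_smul] at h1
    have h2 := (hdφ y).hasFDerivAt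
    have h2' : HasFDerivAt φ (fderiv ℝ φ y) (r • v) := by rw [hrv]; exact h2
    exact h2'.comp_hasDerivAt r h1
  have hdf : HasDerivAt f (fderiv ℝ φ x u - fderiv ℝ φ y v) r := hgu.sub hgv
  -- eventually rn n > 0
  have hpos : ∀ᶠ n in Filter.atTop, 0 < rn n := hlim.eventually (eventually_gt_nhds hr)
  have hfn : ∀ᶠ n in Filter.atTop, f (rn n) = 0 := by
    filter_upwards [hpos] with n hn
    have h1 : ‖rn n • u‖ = rn n := by
      rw [norm_smul, hun, Real.norm_eq_abs, abs_of_pos hn, mul_one]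
    have h2 : ‖rn n • v‖ = rn n := by
      rw [norm_smul, hvn, Real.norm_eq_abs, abs_of_pos hn, mul_one]
    simp [hf, hconst n _ _ h1 h2]
  have hfcont : Continuous f := by
    apply Continuous.sub
    · exact hφ.continuous.comp (continuous_id.smul continuous_const)
    · exact hφ.continuous.comp (continuous_id.smul continuous_const)
  have hfr : f r = 0 := by
    have h1 : Filter.Tendsto (fun n => f (rn n)) Filter.atTop (nhds (f r)) :=
      (hfcont.tendsto r).comp hlim
    have h2 : Filter.Tendsto (fun n => f (rn n)) Filter.atTop (nhds 0) :=
      Filter.Tendsto.congr' (hfn.mono fun n hn => hn.symm) tendsto_const_nhds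
    exact tendsto_nhds_unique h1 h2
  -- tendsto within punctured neighborhood
  have hwithin : Filter.Tendsto rn Filter.atTop (nhdsWithin r {r}ᶜ) :=
    tendsto_nhdsWithin_of_tendsto_nhds_of_eventually_within rn hlim
      (Filter.Eventually.of_forall fun n => hne n)
  have hslope := (hasDerivAt_iff_tendsto_slope.mp hdf).comp hwithin
  have hslope0 : ∀ᶠ n in Filter.atTop, slope f r (rn n) = 0 := by
    filter_upwards [hfn] with n hn
    simp [slope, hfr, hn]
  have hz : fderiv ℝ φ x u - fderiv ℝ φ y v = 0 :=
    tendsto_nhds_unique hslope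
      (Filter.Tendsto.congr' (hslope0.mono fun n hn => hn.symm) tendsto_const_nhds)
  linarith [hz]
end
end

section
/- Let Ω ∈ ℝ and let ω₀ : ℝ² → ℝ be C¹ with associated smooth velocity field v₀ satisfying (v₀ − Ω x⊥)·∇ω₀ = 0 on ℝ². Define ω(x,t) := ω₀(R_{Ωt} x), where R_α is the clockwise rotation by angle α. If v(x,t) := R_{−Ωt} v₀(R_{Ωt} x) and ∇⊥·v₀ = ω₀, then ω satisfies the transport equation ∂_t ω + v·∇ω = 0 on ℝ² × ℝ. -/
noncomputable section

open Real Set Metric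

/-- Clockwise rotation by angle `α`. -/
def rotC (α : ℝ) (x : E2) : E2 :=
  EuclideanSpace.single 0 (x 0 * Real.cos α + x 1 * Real.sin α) +
    EuclideanSpace.single 1 (-(x 0) * Real.sin α + x 1 * Real.cos α)

def rotCL (α : ℝ) : E2 →L[ℝ] E2 :=
  (EuclideanSpace.proj (0:Fin 2)).smulRight
      (EuclideanSpace.single 0 (Real.cos α) + EuclideanSpace.single 1 (-Real.sin α))
  + (EuclideanSpace.proj (1:Fin 2)).smulRight
      (EuclideanSpace.single 0 (Real.sin α) + EuclideanSpace.single 1 (Real.cos α))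

lemma single_eq_smul (i : Fin 2) (c : ℝ) : EuclideanSpace.single i c = c • ee i := by
  ext j; simp [ee, EuclideanSpace.single_apply]

lemma rotC_eq (α : ℝ) : rotC α = ⇑(rotCL α) := by
  funext x; ext i
  fin_cases i <;> simp [rotC, rotCL, EuclideanSpace.single_apply]

lemma rotC_apply0 (α : ℝ) (x : E2) : rotC α x 0 = x 0 * Real.cos α + x 1 * Real.sin α := by
  simp [rotC, EuclideanSpace.single_apply]

lemma rotC_apply1 (α : ℝ) (x : E2) : rotC α x 1 = -(x 0) * Real.sin α + x 1 * Real.cos α := by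
  simp [rotC, EuclideanSpace.single_apply]

lemma fderiv_apply_pair (ω₀ : E2 → ℝ) (y : E2) (a b : ℝ) :
    fderiv ℝ ω₀ y (a • ee 0 + b • ee 1) = a * pd 0 ω₀ y + b * pd 1 ω₀ y := by
  simp [pd, (fderiv ℝ ω₀ y).map_add, (fderiv ℝ ω₀ y).map_smul]

/-- If `(v₀ - Ω x⊥) · ∇ω₀ = 0` and `∇⊥ · v₀ = ω₀`, then `ω(x,t) := ω₀(R_{Ωt} x)` solves the
transport equation `∂ₜω + v · ∇ω = 0` with `v(x,t) := R_{-Ωt} v₀(R_{Ωt} x)`. -/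
theorem stmt12 (Ω : ℝ) (v₀ : E2 → E2) (ω₀ : E2 → ℝ)
    (hv : ContDiff ℝ 1 v₀) (hω : ContDiff ℝ 1 ω₀)
    (hsteady : ∀ x : E2,
      (v₀ x 0 - Ω * perpVec x 0) * pd 0 ω₀ x
        + (v₀ x 1 - Ω * perpVec x 1) * pd 1 ω₀ x = 0)
    (hcurl : ∀ x : E2,
      fderiv ℝ (fun y => v₀ y 1) x (ee 0) - fderiv ℝ (fun y => v₀ y 0) x (ee 1) = ω₀ x) :
    ∀ (x : E2) (t : ℝ),
      deriv (fun s => ω₀ (rotC (Ω * s) x)) t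
        + (rotC (-(Ω * t)) (v₀ (rotC (Ω * t) x))) 0 * pd 0 (fun y => ω₀ (rotC (Ω * t) y)) x
        + (rotC (-(Ω * t)) (v₀ (rotC (Ω * t) x))) 1 * pd 1 (fun y => ω₀ (rotC (Ω * t) y)) x
        = 0 := by
  intro x t
  have hωd : Differentiable ℝ ω₀ := hω.differentiable one_ne_zero
  set c := Ω * t with hc
  set y := rotC c x with hy
  -- time derivative
  have hg : HasDerivAt (fun s => rotC (Ω * s) x)
      ((Ω * y 1) • ee 0 + (-(Ω * y 0)) • ee 1) t := by
    have hc' : HasDerivAt (fun s : ℝ => Ω * s) Ω t := by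
      simpa using (hasDerivAt_id t).const_mul Ω
    have h0 : HasDerivAt (fun s : ℝ => x 0 * Real.cos (Ω * s) + x 1 * Real.sin (Ω * s))
        (Ω * y 1) t := by
      have := (((Real.hasDerivAt_cos (Ω * t)).comp t hc').const_mul (x 0)).add
        (((Real.hasDerivAt_sin (Ω * t)).comp t hc').const_mul (x 1))
      refine this.congr_deriv ?_
      rw [hy, rotC_apply1]; simp [Function.comp]; ring
    have h1 : HasDerivAt (fun s : ℝ => -(x 0) * Real.sin (Ω * s) + x 1 * Real.cos (Ω * s))
        (-(Ω * y 0)) t := by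
      have := (((Real.hasDerivAt_sin (Ω * t)).comp t hc').const_mul (-(x 0))).add
        (((Real.hasDerivAt_cos (Ω * t)).comp t hc').const_mul (x 1))
      refine this.congr_deriv ?_
      rw [hy, rotC_apply0]; simp [Function.comp]; ring
    have hfun : (fun s => rotC (Ω * s) x)
        = fun s : ℝ => (x 0 * Real.cos (Ω * s) + x 1 * Real.sin (Ω * s)) • ee 0
            + (-(x 0) * Real.sin (Ω * s) + x 1 * Real.cos (Ω * s)) • ee 1 := by
      funext s; rw [rotC, single_eq_smul, single_eq_smul]
    rw [hfun]
    exact (h0.smul_const (ee 0)).add (h1.smul_const (ee 1))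
  -- deriv value
  have hderiv : deriv (fun s => ω₀ (rotC (Ω * s) x)) t
      = Ω * y 1 * pd 0 ω₀ y + (-(Ω * y 0)) * pd 1 ω₀ y := by
    have := ((hωd y).hasFDerivAt.comp_hasDerivAt t hg).deriv
    simp only [Function.comp_def] at this
    rw [this, fderiv_apply_pair]
  -- spatial derivatives
  have hpd : ∀ i : Fin 2, pd i (fun z => ω₀ (rotC c z)) x
      = fderiv ℝ ω₀ y (rotCL c (ee i)) := by
    intro i
    have : (fun z => ω₀ (rotC c z)) = ω₀ ∘ (rotCL c) := by
      funext z; simp [rotC_eq, Function.comp]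
    rw [pd, this, fderiv_comp x (hωd _) (rotCL c).differentiableAt,
      (rotCL c).fderiv]
    simp [rotC_eq] at hy
    rw [← hy]
    rfl
  have he0 : rotCL c (ee 0) = Real.cos c • ee 0 + (-Real.sin c) • ee 1 := by
    rw [← rotC_eq, rotC]
    ext j; fin_cases j <;> simp [ee, EuclideanSpace.single_apply]
  have he1 : rotCL c (ee 1) = Real.sin c • ee 0 + Real.cos c • ee 1 := by
    rw [← rotC_eq, rotC]
    ext j; fin_cases j <;> simp [ee, EuclideanSpace.single_apply]
  have hpd0 : pd 0 (fun z => ω₀ (rotC c z)) x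
      = Real.cos c * pd 0 ω₀ y + (-Real.sin c) * pd 1 ω₀ y := by
    rw [hpd 0, he0, fderiv_apply_pair]
  have hpd1 : pd 1 (fun z => ω₀ (rotC c z)) x
      = Real.sin c * pd 0 ω₀ y + Real.cos c * pd 1 ω₀ y := by
    rw [hpd 1, he1, fderiv_apply_pair]
  have hw0 : rotC (-c) (v₀ y) 0 = v₀ y 0 * Real.cos c - v₀ y 1 * Real.sin c := by
    rw [rotC_apply0, Real.cos_neg, Real.sin_neg]; ring
  have hw1 : rotC (-c) (v₀ y) 1 = v₀ y 0 * Real.sin c + v₀ y 1 * Real.cos c := by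
    rw [rotC_apply1, Real.cos_neg, Real.sin_neg]; ring
  have hst := hsteady y
  simp only [perpVec, EuclideanSpace.single_apply] at hst
  rw [hderiv, hw0, hw1, hpd0, hpd1]
  simp at hst
  linear_combination hst + (v₀ y 0 * pd 0 ω₀ y + v₀ y 1 * pd 1 ω₀ y) * (Real.sin_sq_add_cos_sq c)
end
end
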